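/- arXiv:1403.3511 — 2 statements merged into one kernel-verified Lean document; each statement's English description precedes it below -/
import Mathlib

section
/- For every natural number k, the Hermite function φ_k is a smooth eigenfunction of the one-dimensional harmonic oscillator: for all real x, −(1/2)·φ_k''(x) + (1/2)·x²·φ_k(x) = (k + 1/2)·φ_k(x). -/
/-- The `k`-th physicists' Hermite polynomial. -/
noncomputable def hermitePoly : ℕ → ℝ → ℝ
  | 0, _ => 1
  | 1, x => 2 * x
  | k + 2, x => 2 * x * hermitePoly (k + 1) x - 2 * (k + 1) * hermitePoly k x

lemma hermitePoly_succ (k : ℕ) (x : ℝ) :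
    hermitePoly (k + 1) x = 2 * x * hermitePoly k x - 2 * k * hermitePoly (k - 1) x := by
  cases k with
  | zero => simp [hermitePoly]
  | succ m => simp only [hermitePoly]; push_cast; ring

lemma hasDerivAt_hermitePoly : ∀ (k : ℕ) (x : ℝ),
    HasDerivAt (hermitePoly k) (2 * k * hermitePoly (k - 1) x) x
  | 0, x => by simpa [hermitePoly] using (hasDerivAt_const x (1 : ℝ))
  | 1, x => by
      have := (hasDerivAt_id x).const_mul (2 : ℝ)
      simp only [hermitePoly] at *
      exact this.congr_deriv (by simp [hermitePoly])
  | (k + 2), x => by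
      have h1 := hasDerivAt_hermitePoly (k + 1) x
      have h0 := hasDerivAt_hermitePoly k x
      have hx : HasDerivAt (fun y : ℝ => 2 * y) (2 : ℝ) x := by
        simpa using (hasDerivAt_id x).const_mul (2 : ℝ)
      have h := (hx.mul h1).sub (h0.const_mul (2 * ((k : ℝ) + 1)))
      have heq : ∀ y : ℝ, hermitePoly (k + 2) y =
          2 * y * hermitePoly (k + 1) y - 2 * ((k : ℝ) + 1) * hermitePoly k y := by
        intro y; simp only [hermitePoly]
      have h' := h.congr_of_eventuallyEq (Filter.Eventually.of_forall heq)
      refine h'.congr_deriv (Eq.symm ?_)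
      simp only [Nat.add_sub_cancel]
      have hs := hermitePoly_succ k x
      push_cast
      linear_combination (2 * ((k : ℝ) + 1)) * hs

lemma contDiff_hermitePoly : ∀ k : ℕ, ContDiff ℝ (⊤ : ℕ∞) (hermitePoly k)
  | 0 => by simpa [hermitePoly] using contDiff_const
  | 1 => by
      have : (hermitePoly 1) = fun x : ℝ => 2 * x := by funext x; simp [hermitePoly]
      rw [this]; fun_prop
  | (k + 2) => by
      have h1 := contDiff_hermitePoly (k + 1)
      have h0 := contDiff_hermitePoly k
      have : (hermitePoly (k + 2)) = fun x : ℝ =>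
          2 * x * hermitePoly (k + 1) x - 2 * ((k : ℝ) + 1) * hermitePoly k x := by
        funext x; simp only [hermitePoly]
      rw [this]
      exact ((contDiff_const.mul contDiff_id).mul h1).sub (contDiff_const.mul h0)

lemma key (k : ℕ) (x : ℝ) :
    2 * (k : ℝ) * (2 * ((k - 1 : ℕ) : ℝ) * hermitePoly (k - 1 - 1) x)
      - 2 * x * (2 * (k : ℝ) * hermitePoly (k - 1) x)
      + 2 * (k : ℝ) * hermitePoly k x = 0 := by
  cases k with
  | zero => simp
  | succ m =>
      have hs := hermitePoly_succ m x
      simp only [Nat.add_sub_cancel]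
      push_cast
      linear_combination (2 * ((m : ℝ) + 1)) * hs

/-- The `k`-th Hermite function φ_k(x) = π^(−1/4)·(2^k·k!)^(−1/2)·H_k(x)·e^(−x²/2). -/
noncomputable def hermiteFun (k : ℕ) (x : ℝ) : ℝ :=
  Real.pi ^ (-(1 / 4 : ℝ)) * (Real.sqrt (2 ^ k * Nat.factorial k))⁻¹ *
    hermitePoly k x * Real.exp (-x ^ 2 / 2)

lemma hasDerivAt_gauss (x : ℝ) :
    HasDerivAt (fun y : ℝ => Real.exp (-y ^ 2 / 2)) (-x * Real.exp (-x ^ 2 / 2)) x := by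
  have h : HasDerivAt (fun y : ℝ => -y ^ 2 / 2) (-x) x := by
    have := ((hasDerivAt_pow 2 x).neg).div_const 2
    exact this.congr_deriv (by ring)
  simpa [mul_comm] using h.exp

/-- The Hermite function `φ_k` is a smooth eigenfunction of the harmonic oscillator:
`−(1/2)·φ_k''(x) + (1/2)·x²·φ_k(x) = (k + 1/2)·φ_k(x)`. -/
theorem hermiteFun_eigenfunction (k : ℕ) :
    ContDiff ℝ (⊤ : ℕ∞) (hermiteFun k) ∧
      ∀ x : ℝ,
        -(1 / 2 : ℝ) * iteratedDeriv 2 (hermiteFun k) x +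
            (1 / 2 : ℝ) * x ^ 2 * hermiteFun k x =
          ((k : ℝ) + 1 / 2) * hermiteFun k x := by
  set c : ℝ := Real.pi ^ (-(1 / 4 : ℝ)) * (Real.sqrt (2 ^ k * Nat.factorial k))⁻¹ with hc
  have hfun : hermiteFun k = fun x => c * hermitePoly k x * Real.exp (-x ^ 2 / 2) := by
    funext x; simp [hermiteFun, hc]
  have hgauss : ContDiff ℝ (⊤ : ℕ∞) (fun y : ℝ => Real.exp (-y ^ 2 / 2)) :=
    Real.contDiff_exp.comp (((contDiff_id.pow 2).neg).div_const 2)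
  constructor
  · rw [hfun]
    exact (contDiff_const.mul (contDiff_hermitePoly k)).mul hgauss
  intro x
  -- first derivative
  have hd1 : ∀ y : ℝ, HasDerivAt (hermiteFun k)
      (c * (2 * k * hermitePoly (k - 1) y - y * hermitePoly k y) * Real.exp (-y ^ 2 / 2)) y := by
    intro y
    rw [hfun]
    have h := (((hasDerivAt_hermitePoly k y).const_mul c).mul (hasDerivAt_gauss y))
    exact h.congr_deriv (by ring)
  have hderiv1 : deriv (hermiteFun k) =
      fun y => c * (2 * k * hermitePoly (k - 1) y - y * hermitePoly k y)
        * Real.exp (-y ^ 2 / 2) := by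
    funext y; exact (hd1 y).deriv
  -- second derivative
  have hd2 : HasDerivAt (deriv (hermiteFun k))
      (c * (2 * k * (2 * ((k - 1 : ℕ) : ℝ) * hermitePoly (k - 1 - 1) x)
          - (hermitePoly k x + x * (2 * k * hermitePoly (k - 1) x))
          - x * (2 * k * hermitePoly (k - 1) x - x * hermitePoly k x))
        * Real.exp (-x ^ 2 / 2)) x := by
    rw [hderiv1]
    have hin : HasDerivAt
        (fun y : ℝ => c * (2 * k * hermitePoly (k - 1) y - y * hermitePoly k y))
        (c * (2 * k * (2 * ((k - 1 : ℕ) : ℝ) * hermitePoly (k - 1 - 1) x)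
          - (hermitePoly k x + x * (2 * k * hermitePoly (k - 1) x)))) x := by
      have hin' := ((((hasDerivAt_hermitePoly (k - 1) x).const_mul (2 * (k : ℝ))).sub
        ((hasDerivAt_id x).mul (hasDerivAt_hermitePoly k x))).const_mul c)
      simp only [id_eq, one_mul] at hin'
      exact hin'
    have h := hin.mul (hasDerivAt_gauss x)
    exact h.congr_deriv (by ring)
  have h2 : iteratedDeriv 2 (hermiteFun k) x = deriv (deriv (hermiteFun k)) x := by
    rw [iteratedDeriv_succ, iteratedDeriv_one]
  rw [h2, hd2.deriv, hfun]
  have hk := key k x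
  set e := Real.exp (-x ^ 2 / 2)
  linear_combination (-(1 / 2) * c * e) * hk
end

section
/- Let N ≥ 1 and let K, R be natural numbers with R ≤ K + 2 and (K + 3 − R)² > K + 1. Let r ∈ ℕ^N with r_l ≤ R for every l, and let k ∈ ℕ^N satisfy the hyperbolic cross condition ∏_{l=1}^N (1 + k_l) ≤ K + 1. Then the set of indices l ∈ {1, …, N} with k_l + r_l ≥ K + 2 contains at most one element. -/
/-- On the hyperbolic cross `∏_l (1 + k_l) ≤ K + 1`, if `R ≤ K + 2` and
`(K + 3 − R)² > K + 1`, and all `r_l ≤ R`, then at most one index `l` satisfies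
`k_l + r_l ≥ K + 2`. -/
theorem hyperbolic_cross_at_most_one_large_component {N : ℕ} (hN : 1 ≤ N)
    (K R : ℕ) (hR : R ≤ K + 2) (hKR : K + 1 < (K + 3 - R) ^ 2)
    (r : Fin N → ℕ) (hr : ∀ l, r l ≤ R)
    (k : Fin N → ℕ) (hk : ∏ l, (1 + k l) ≤ K + 1) :
    (Finset.univ.filter fun l : Fin N => K + 2 ≤ k l + r l).card ≤ 1 := by
  by_contra h
  push_neg at h
  obtain ⟨a, ha, b, hb, hab⟩ := Finset.one_lt_card.mp h
  simp only [Finset.mem_filter, Finset.mem_univ, true_and] at ha hb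
  have h1 : K + 3 - R ≤ 1 + k a := by have := hr a; omega
  have h2 : K + 3 - R ≤ 1 + k b := by have := hr b; omega
  have hsub : ({a, b} : Finset (Fin N)) ⊆ Finset.univ := Finset.subset_univ _
  have hle : ∏ l ∈ ({a, b} : Finset (Fin N)), (1 + k l) ≤ ∏ l, (1 + k l) :=
    Finset.prod_le_prod_of_subset_of_one_le' hsub (fun i _ _ => by omega)
  rw [Finset.prod_pair hab] at hle
  have : (K + 3 - R) ^ 2 ≤ (1 + k a) * (1 + k b) := by
    rw [sq]; exact Nat.mul_le_mul h1 h2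
  omega
end
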